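/- The number of meanders of length 2N+1 with exactly k peaks and ending at a strictly positive position equals binomial(N+1,k)·binomial(N,k). -/

import Mathlib

/-- The value at time `i` of the Bernoulli path with `n` steps encoded by
`f : Fin n → Bool` (`true` = step `+1`, `false` = step `-1`), started at `0`. -/
def pathVal {n : ℕ} (f : Fin n → Bool) (i : ℕ) : ℤ :=
  ∑ j ∈ Finset.range i, (if h : j < n then (if f ⟨j, h⟩ then (1 : ℤ) else -1) else 0)

/-- `x` is a peak: `1 ≤ x ≤ n-1` and `S(x-1) = S(x+1) = S(x) - 1`. -/
def IsPeak {n : ℕ} (f : Fin n → Bool) (x : ℕ) : Prop :=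
  0 < x ∧ x < n ∧ pathVal f x = pathVal f (x - 1) + 1 ∧
    pathVal f (x + 1) = pathVal f x - 1

instance {n : ℕ} (f : Fin n → Bool) (x : ℕ) : Decidable (IsPeak f x) := by
  unfold IsPeak; infer_instance

/-- Number of peaks of the path encoded by `f`. -/
def numPeaks {n : ℕ} (f : Fin n → Bool) : ℕ :=
  ((Finset.range n).filter (fun x => IsPeak f x)).card

/-- The path stays nonnegative on `[0, n]`. -/
def IsNonneg {n : ℕ} (f : Fin n → Bool) : Prop :=
  ∀ i ∈ Finset.range (n + 1), 0 ≤ pathVal f i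

instance {n : ℕ} (f : Fin n → Bool) : Decidable (IsNonneg f) := by
  unfold IsNonneg; infer_instance

/-!
Refine the count by the number `d` of down-steps: the nonnegative paths of length `n` with
`d` down-steps (`2d ≤ n + 1`) and `k` peaks number `C(n-d, k) C(d, k) - C(n-d+1, k) C(d-1, k)`.
This follows by induction on `n`, splitting off the last two steps: appending a down-step
creates a peak exactly when the previous step was an up-step, which yields a Pascal-type
recursion that the formula also satisfies. A path of length `2N+1` ends at `2N+1-2d`, which is
positive exactly when `d ≤ N`, and the sum of the formula over `d ≤ N` telescopes to
`C(N+1, k) C(N, k)`.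
-/

open Finset

variable {n : ℕ}

theorem pathVal_zero (f : Fin n → Bool) : pathVal f 0 = 0 := by
  simp [pathVal]

theorem pathVal_succ (f : Fin n → Bool) {i : ℕ} (hi : i < n) :
    pathVal f (i + 1) = pathVal f i + if f ⟨i, hi⟩ then 1 else -1 := by
  rw [pathVal, sum_range_succ, dif_pos hi, ← pathVal]

theorem pathVal_snoc (f : Fin n → Bool) (b : Bool) {i : ℕ} (hi : i ≤ n) :
    pathVal (Fin.snoc f b) i = pathVal f i := by
  refine sum_congr rfl fun j hj => ?_
  have hjn : j < n := (mem_range.1 hj).trans_le hi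
  rw [dif_pos hjn, dif_pos (by omega)]
  exact congrArg (fun b : Bool => if b then (1 : ℤ) else -1)
    (Fin.snoc_castSucc (i := ⟨j, hjn⟩) ..)

theorem pathVal_snoc_last (f : Fin n → Bool) (b : Bool) :
    pathVal (Fin.snoc f b) (n + 1) = pathVal f n + if b then 1 else -1 := by
  rw [pathVal_succ _ n.lt_succ_self, pathVal_snoc f b le_rfl]
  exact congrArg _ (congrArg (fun b : Bool => if b then (1 : ℤ) else -1)
    (Fin.snoc_last (α := fun _ => Bool) ..))

def downSteps (f : Fin n → Bool) : ℕ := #{i | f i = false}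

theorem downSteps_snoc (f : Fin n → Bool) (b : Bool) :
    downSteps (Fin.snoc f b) = downSteps f + if b then 0 else 1 := by
  simp only [downSteps, card_filter, Fin.sum_univ_castSucc, Fin.snoc_castSucc, Fin.snoc_last]
  cases b <;> rfl

theorem pathVal_eq_sub_downSteps (f : Fin n → Bool) : pathVal f n = n - 2 * downSteps f := by
  induction n with
  | zero => simp [pathVal_zero, downSteps]
  | succ n ih =>
    rw [← Fin.snoc_init_self f, pathVal_snoc_last, downSteps_snoc, ih]
    cases f (Fin.last n) <;> simp <;> ring

theorem isPeak_snoc_of_lt (f : Fin n → Bool) (b : Bool) {x : ℕ} (hx : x < n) :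
    IsPeak (Fin.snoc f b) x ↔ IsPeak f x := by
  simp only [IsPeak, pathVal_snoc f b (show x - 1 ≤ n by omega), pathVal_snoc f b hx.le,
    pathVal_snoc f b hx, hx, show x < n + 1 by omega]

theorem numPeaks_snoc (f : Fin n → Bool) (b : Bool) :
    numPeaks (Fin.snoc f b) = numPeaks f + if IsPeak (Fin.snoc f b) n then 1 else 0 := by
  have hlt : {x ∈ range n | IsPeak (Fin.snoc f b) x} = {x ∈ range n | IsPeak f x} :=
    filter_congr fun x hx => isPeak_snoc_of_lt f b (mem_range.1 hx)
  rw [numPeaks, range_add_one, filter_insert, hlt]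
  split_ifs
  · rw [card_insert_of_notMem (by simp), numPeaks]
  · rfl

theorem not_isPeak_snoc_true (f : Fin n → Bool) : ¬ IsPeak (Fin.snoc f true) n := by
  rintro ⟨-, -, -, h⟩
  rw [pathVal_snoc_last, pathVal_snoc f true le_rfl, if_pos rfl] at h
  omega

theorem isPeak_snoc_snoc_false_iff (g : Fin n → Bool) (b : Bool) :
    IsPeak (Fin.snoc (Fin.snoc g b) false) (n + 1) ↔ b = true := by
  simp only [IsPeak, pathVal_snoc_last, pathVal_snoc _ false le_rfl,
    pathVal_snoc _ false n.le_succ, Nat.add_sub_cancel, pathVal_snoc g b le_rfl]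
  cases b <;> simp

theorem card_eq_card_snoc_true_add_card_snoc_false (s : Finset (Fin (n + 1) → Bool)) :
    #s = #{g : Fin n → Bool | Fin.snoc g true ∈ s} +
      #{g : Fin n → Bool | Fin.snoc g false ∈ s} := by
  conv_lhs => rw [← filter_univ_mem s]
  simp only [card_filter]
  rw [← (Fin.snocEquiv fun _ => Bool).sum_comp, Fintype.sum_prod_type, Fintype.sum_bool]
  rfl

theorem isNonneg_snoc (f : Fin n → Bool) (b : Bool) :
    IsNonneg (Fin.snoc f b) ↔ IsNonneg f ∧ 0 ≤ pathVal f n + if b then 1 else -1 := by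
  rw [IsNonneg, range_add_one, forall_mem_insert, pathVal_snoc_last, and_comm]
  refine and_congr_left' (forall₂_congr fun i hi => ?_)
  rw [pathVal_snoc f b (Nat.lt_succ_iff.1 (mem_range.1 hi))]

theorem IsNonneg.pathVal_nonneg {f : Fin n → Bool} (hf : IsNonneg f) : 0 ≤ pathVal f n :=
  hf n (self_mem_range_succ n)

def meanders (n d k : ℕ) : Finset (Fin n → Bool) :=
  {f | IsNonneg f ∧ downSteps f = d ∧ numPeaks f = k}

theorem snoc_true_mem_meanders {d k : ℕ} (g : Fin n → Bool) :
    Fin.snoc g true ∈ meanders (n + 1) d k ↔ g ∈ meanders n d k := by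
  simp only [meanders, mem_filter, mem_univ, true_and, isNonneg_snoc, downSteps_snoc,
    numPeaks_snoc, not_isPeak_snoc_true, if_true, if_false, add_zero]
  exact ⟨fun ⟨⟨hg, _⟩, hd, hk⟩ => ⟨hg, hd, hk⟩,
    fun ⟨hg, hd, hk⟩ => ⟨⟨hg, by linarith [hg.pathVal_nonneg]⟩, hd, hk⟩⟩

theorem snoc_false_notMem_meanders_zero {k : ℕ} (g : Fin n → Bool) :
    Fin.snoc g false ∉ meanders (n + 1) 0 k := by
  simp [meanders, downSteps_snoc]

theorem snoc_false_mem_meanders {d k : ℕ} (g : Fin n → Bool) :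
    Fin.snoc g false ∈ meanders (n + 1) (d + 1) k ↔
      2 * d < n ∧ IsNonneg g ∧ downSteps g = d ∧
        numPeaks g + (if IsPeak (Fin.snoc g false) n then 1 else 0) = k := by
  simp only [meanders, mem_filter, mem_univ, true_and, isNonneg_snoc, downSteps_snoc,
    numPeaks_snoc, pathVal_eq_sub_downSteps, Bool.false_eq_true, if_false,
    Nat.add_right_cancel_iff]
  constructor
  · rintro ⟨⟨hg, hpos⟩, rfl, hk⟩
    exact ⟨by omega, hg, rfl, hk⟩
  · rintro ⟨hlt, hg, rfl, hk⟩
    exact ⟨⟨hg, by omega⟩, rfl, hk⟩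

theorem snoc_snoc_false_mem_meanders {d k : ℕ} (hd : 2 * d ≤ n) (g : Fin n → Bool)
    (b : Bool) :
    Fin.snoc (Fin.snoc g b) false ∈ meanders (n + 2) (d + 1) k ↔
      b.toNat ≤ k ∧ Fin.snoc g b ∈ meanders (n + 1) d (k - b.toNat) := by
  rw [snoc_false_mem_meanders]
  simp only [isPeak_snoc_snoc_false_iff, meanders, mem_filter, mem_univ, true_and]
  cases b <;>
  simp only [Bool.toNat_true, Bool.toNat_false, Bool.false_eq_true, if_true, if_false, add_zero,
    Nat.sub_zero] <;>
  constructor <;> rintro ⟨h1, h2, h3, h4⟩ <;> exact ⟨by omega, h2, h3, by omega⟩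

theorem card_meanders_succ (n d k : ℕ) :
    #(meanders (n + 1) d k) =
      #(meanders n d k) + #{g : Fin n → Bool | Fin.snoc g false ∈ meanders (n + 1) d k} := by
  simp only [card_eq_card_snoc_true_add_card_snoc_false (meanders (n + 1) d k),
    snoc_true_mem_meanders, filter_univ_mem]

theorem card_meanders_zero_down (n k : ℕ) : #(meanders n 0 k) = if k = 0 then 1 else 0 := by
  induction n with
  | zero =>
    cases k <;> simp [meanders, IsNonneg, numPeaks, downSteps, pathVal_zero]
  | succ n ih =>
    rw [card_meanders_succ, ih, filter_false_of_mem fun g _ => snoc_false_notMem_meanders_zero g,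
      card_empty, add_zero]

theorem card_meanders_eq_zero {d k : ℕ} (h : n < 2 * d) : #(meanders n d k) = 0 := by
  refine card_eq_zero.2 (filter_eq_empty_iff.2 fun f _ ⟨hf, hd, _⟩ => ?_)
  have := hf.pathVal_nonneg
  rw [pathVal_eq_sub_downSteps, hd] at this
  omega

theorem card_meanders_add_two {d : ℕ} (hd : 2 * d ≤ n) (k : ℕ) :
    #(meanders (n + 2) (d + 1) k) + #(meanders n d k) =
      #(meanders (n + 1) (d + 1) k) + #(meanders (n + 1) d k) +
        if k = 0 then 0 else #(meanders n d (k - 1)) := by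
  have hdown : #{h : Fin (n + 1) → Bool | Fin.snoc h false ∈ meanders (n + 2) (d + 1) k} =
      (if k = 0 then 0 else #(meanders n d (k - 1))) +
        #{g : Fin n → Bool | Fin.snoc g false ∈ meanders (n + 1) d k} := by
    rw [card_eq_card_snoc_true_add_card_snoc_false]
    simp only [mem_filter, mem_univ, true_and, snoc_snoc_false_mem_meanders hd, Bool.toNat_true,
      Bool.toNat_false, snoc_true_mem_meanders, zero_le, Nat.sub_zero]
    split_ifs with hk
    · simp [hk]
    · simp [show 1 ≤ k by omega]
  rw [card_meanders_succ (n + 1), hdown, card_meanders_succ n d k]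
  ring

/-- The number of nonnegative paths with `u` up-steps, `d ≤ u + 1` down-steps and `k` peaks
(`card_meanders`). -/
def peakBallot (u d k : ℕ) : ℤ :=
  u.choose k * d.choose k - if d = 0 then 0 else (u + 1).choose k * (d - 1).choose k

theorem peakBallot_zero_down (u k : ℕ) : peakBallot u 0 k = if k = 0 then 1 else 0 := by
  cases k <;> simp [peakBallot]

theorem peakBallot_self_succ (u k : ℕ) : peakBallot u (u + 1) k = 0 := by
  simp [peakBallot, mul_comm]

theorem peakBallot_add_two (u d k : ℕ) :
    peakBallot (u + 1) (d + 1) k + peakBallot u d k =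
      peakBallot u (d + 1) k + peakBallot (u + 1) d k +
        if k = 0 then 0 else peakBallot u d (k - 1) := by
  rcases k with _ | k
  · simp [peakBallot]
  rcases d with _ | d <;> simp [peakBallot, Nat.choose_succ_succ] <;> ring

theorem card_meanders {n d : ℕ} (h : 2 * d ≤ n + 1) (k : ℕ) :
    (#(meanders n d k) : ℤ) = peakBallot (n - d) d k := by
  induction n using Nat.strong_induction_on generalizing d k with
  | _ n ih =>
  rcases d with _ | e
  · rw [card_meanders_zero_down, peakBallot_zero_down]
    split_ifs <;> rfl
  rcases (show 2 * e + 1 = n ∨ 2 * e + 2 ≤ n by omega) with rfl | hle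
  · rw [card_meanders_eq_zero (by omega), show 2 * e + 1 - (e + 1) = e by omega,
      peakBallot_self_succ, Nat.cast_zero]
  obtain ⟨u, rfl⟩ : ∃ u, n = e + u + 2 := ⟨n - e - 2, by omega⟩
  have hrec := congrArg (Nat.cast : ℕ → ℤ)
    (card_meanders_add_two (n := e + u) (d := e) (by omega) k)
  push_cast at hrec
  rw [ih (e + u + 1) (by omega) (d := e + 1) (by omega),
    ih (e + u + 1) (by omega) (d := e) (by omega), ih (e + u) (by omega) (d := e) (by omega),
    ih (e + u) (by omega) (d := e) (by omega)] at hrec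
  rw [show e + u + 2 - (e + 1) = u + 1 by omega]
  rw [show e + u + 1 - (e + 1) = u by omega, show e + u + 1 - e = u + 1 by omega,
    show e + u - e = u by omega] at hrec
  linarith [peakBallot_add_two u e k]

theorem sum_peakBallot (N k : ℕ) :
    ∑ d ∈ range (N + 1), peakBallot (2 * N + 1 - d) d k = (N + 1).choose k * N.choose k := by
  set G : ℕ → ℤ := fun d => if d = 0 then 0 else (2 * N + 2 - d).choose k * (d - 1).choose k
  have htele : ∀ d ∈ range (N + 1), peakBallot (2 * N + 1 - d) d k = G (d + 1) - G d := by
    intro d hd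
    simp only [peakBallot, G, Nat.add_sub_cancel, show 2 * N + 1 - d + 1 = 2 * N + 2 - d by
      have := mem_range.1 hd; omega]
    simp [show 2 * N + 2 - (d + 1) = 2 * N + 1 - d by omega]
  rw [sum_congr rfl htele, sum_range_sub]
  simp [G, show 2 * N + 2 - (N + 1) = N + 1 by omega]

theorem card_positive_meanders_eq_sum (N k : ℕ) :
    #{f : Fin (2 * N + 1) → Bool | IsNonneg f ∧ 0 < pathVal f (2 * N + 1) ∧ numPeaks f = k} =
      ∑ d ∈ range (N + 1), #(meanders (2 * N + 1) d k) := by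
  have hpos : ∀ f : Fin (2 * N + 1) → Bool,
      0 < pathVal f (2 * N + 1) ↔ downSteps f < N + 1 := by
    intro f
    rw [pathVal_eq_sub_downSteps]
    omega
  rw [card_eq_sum_card_fiberwise (f := downSteps) (t := range (N + 1))
    fun f hf => mem_range.2 ((hpos f).1 (mem_filter.1 hf).2.2.1)]
  refine sum_congr rfl fun d hd => congrArg card (ext fun f => ?_)
  simp only [meanders, mem_filter, mem_univ, true_and, hpos]
  constructor
  · rintro ⟨⟨hf, -, hk⟩, hd⟩
    exact ⟨hf, hd, hk⟩
  · rintro ⟨hf, rfl, hk⟩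
    exact ⟨⟨hf, mem_range.1 hd, hk⟩, rfl⟩

/-- The number of meanders of length `2N+1` with exactly `k` peaks ending at a
strictly positive position is `binomial(N+1,k) · binomial(N,k)`. -/
theorem card_positive_meanders_odd (N k : ℕ) :
    ((Finset.univ : Finset (Fin (2 * N + 1) → Bool)).filter
        (fun f => IsNonneg f ∧ 0 < pathVal f (2 * N + 1) ∧ numPeaks f = k)).card
      = (N + 1).choose k * N.choose k := by
  rw [card_positive_meanders_eq_sum]
  have hsum : ((∑ d ∈ range (N + 1), #(meanders (2 * N + 1) d k) : ℕ) : ℤ) =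
      (N + 1).choose k * N.choose k := by
    push_cast
    rw [← sum_peakBallot]
    exact sum_congr rfl fun d hd => card_meanders (by have := mem_range.1 hd; omega) k
  exact_mod_cast hsum
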